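/- arXiv:2501.00419 — 2 statements merged into one kernel-verified Lean document; each statement's English description precedes it below -/
import Mathlib

section
/- For every n ≥ 4, the graph B_{n,P3} from Construction 1 satisfies ι(B_{n,P3}, P3) = ⌊n/4⌋. -/
open SimpleGraph

/-- `G` contains a copy of the 3-vertex path as a (not necessarily induced) subgraph. -/
def containsP3 {V : Type*} (G : SimpleGraph V) : Prop :=
  ∃ f : Fin 3 → V, Function.Injective f ∧
    ∀ a b, (SimpleGraph.pathGraph 3).Adj a b → G.Adj (f a) (f b)

/-- The closed neighbourhood `N[D]` of a set of vertices `D`. -/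
def closedNbhd {V : Type*} (G : SimpleGraph V) (D : Set V) : Set V :=
  {v | v ∈ D ∨ ∃ d ∈ D, G.Adj d v}

/-- `D` is a `P3`-isolating set of `G`: `G - N[D]` contains no copy of `P3`. -/
def IsP3Isolating {V : Type*} (G : SimpleGraph V) (D : Set V) : Prop :=
  ¬ containsP3 (G.induce (closedNbhd G D)ᶜ)

/-- The `P3`-isolation number `ι(G, P3)`. -/
noncomputable def iotaP3 {V : Type*} (G : SimpleGraph V) : ℕ :=
  sInf {n | ∃ D : Finset V, D.card = n ∧ IsP3Isolating G ↑D}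

/-- The graph `B_{n,P3}` of Construction 1 for `n ≥ 4`: a path on `⌊n/4⌋` vertices, `n % 4`
extra vertices joined to the last path vertex, and `⌊n/4⌋` disjoint copies of `P3`, each
vertex of the `i`-th copy joined to the `i`-th path vertex. -/
def Bgraph (n : ℕ) :
    SimpleGraph (Fin (n / 4) ⊕ Fin (n % 4) ⊕ (Fin (n / 4) × Fin 3)) :=
  SimpleGraph.fromRel (fun u v =>
    match u, v with
    | .inl i, .inl j => j.val = i.val + 1
    | .inl i, .inr (.inl _) => i.val = n / 4 - 1
    | .inl i, .inr (.inr (j, _)) => i = j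
    | .inr (.inr (i, p)), .inr (.inr (j, q)) => i = j ∧ q.val = p.val + 1
    | _, _ => False)

/-!
The path vertices form a `P3`-isolating set: every edge has an endpoint on the path or in a
copy `F_i`, and all of those are dominated by the path, so `B - N[path]` is edgeless. Conversely,
an isolating set `D` must dominate some vertex of every copy `F_i`, which forces `D` to meet the
block `{i} ∪ F_i`; the `⌊n/4⌋` blocks are disjoint, so `|D| ≥ ⌊n/4⌋`.
-/

section P3Isolation

variable {V : Type*} (G : SimpleGraph V)

theorem isP3Isolating_of_forall_adj {D : Set V}
    (h : ∀ u v, G.Adj u v → u ∈ closedNbhd G D ∨ v ∈ closedNbhd G D) : IsP3Isolating G D := by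
  rintro ⟨f, -, hf⟩
  rcases h _ _ (hf 0 1 (by simp [pathGraph_adj])) with h0 | h1
  · exact (f 0).2 h0
  · exact (f 1).2 h1

variable {G}

theorem IsP3Isolating.exists_mem_closedNbhd {D : Set V} (hD : IsP3Isolating G D)
    {f : Fin 3 → V} (hinj : Function.Injective f)
    (hf : ∀ a b, (pathGraph 3).Adj a b → G.Adj (f a) (f b)) : ∃ p, f p ∈ closedNbhd G D := by
  by_contra! h
  exact hD ⟨fun p => ⟨f p, h p⟩, fun a b hab => hinj (congrArg Subtype.val hab), hf⟩

theorem iotaP3_le_card {D : Finset V} (hD : IsP3Isolating G D) : iotaP3 G ≤ D.card :=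
  Nat.sInf_le ⟨D, rfl, hD⟩

theorem le_iotaP3 [Fintype V] {k : ℕ} (h : ∀ D : Finset V, IsP3Isolating G D → k ≤ D.card) :
    k ≤ iotaP3 G := by
  have huniv : IsP3Isolating G (Finset.univ : Finset V) :=
    isP3Isolating_of_forall_adj G fun u _ _ => Or.inl (Or.inl (by simp))
  exact le_csInf ⟨_, Finset.univ, rfl, huniv⟩ fun _ ⟨D, hD, hiso⟩ => hD ▸ h D hiso

end P3Isolation

abbrev Bvertex (n : ℕ) := Fin (n / 4) ⊕ Fin (n % 4) ⊕ (Fin (n / 4) × Fin 3)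

namespace Bgraph

variable {n : ℕ}

def copy (i : Fin (n / 4)) (p : Fin 3) : Bvertex n := .inr (.inr (i, p))

theorem copy_injective (i : Fin (n / 4)) : Function.Injective (copy i) := fun p q h => by
  simpa [copy] using h

theorem copy_adj (i : Fin (n / 4)) (a b : Fin 3) (hab : (pathGraph 3).Adj a b) :
    (Bgraph n).Adj (copy i a) (copy i b) := by
  rw [pathGraph_adj] at hab
  simp [Bgraph, copy]
  omega

def pathVertices (n : ℕ) : Finset (Bvertex n) := Finset.univ.map ⟨Sum.inl, Sum.inl_injective⟩

theorem isP3Isolating_pathVertices : IsP3Isolating (Bgraph n) (pathVertices n) := by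
  have hdom : ∀ v : Bvertex n, (∀ j, v ≠ .inr (.inl j)) →
      v ∈ closedNbhd (Bgraph n) (pathVertices n) := by
    rintro (i | j | ⟨i, p⟩) hv
    · exact Or.inl (by simp [pathVertices])
    · exact absurd rfl (hv j)
    · exact Or.inr ⟨.inl i, by simp [pathVertices], by simp [Bgraph]⟩
  refine isP3Isolating_of_forall_adj _ fun u v huv => ?_
  rcases u with i | j | ⟨i, p⟩
  · exact Or.inl (hdom _ (by simp))
  · refine Or.inr (hdom v ?_)
    rintro j' rfl
    simp [Bgraph] at huv
  · exact Or.inl (hdom _ (by simp))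

/-- The index of the path vertex whose block `{i} ∪ F_i` contains a vertex; pendants, which are
in no block, get the last index. -/
def block : Bvertex n → ℕ
  | .inl i => i
  | .inr (.inl _) => n / 4 - 1
  | .inr (.inr (i, _)) => i

theorem block_eq_of_mem_closedNbhd_copy {D : Set (Bvertex n)} {i : Fin (n / 4)} {p : Fin 3}
    (h : copy i p ∈ closedNbhd (Bgraph n) D) : ∃ d ∈ D, block d = i := by
  rcases h with h | ⟨d, hd, hadj⟩
  · exact ⟨_, h, rfl⟩
  · refine ⟨d, hd, ?_⟩
    rcases d with i' | j | ⟨i', q⟩ <;> simp [Bgraph, copy, block] at hadj ⊢ <;> grind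

theorem le_card_of_isP3Isolating {D : Finset (Bvertex n)} (hD : IsP3Isolating (Bgraph n) D) :
    n / 4 ≤ D.card := by
  have hsurj : Set.SurjOn block (D : Set (Bvertex n)) (Finset.range (n / 4) : Set ℕ) := by
    intro i hi
    have hi : i < n / 4 := by simpa using hi
    obtain ⟨p, hp⟩ := hD.exists_mem_closedNbhd (copy_injective ⟨i, hi⟩) (copy_adj ⟨i, hi⟩)
    exact block_eq_of_mem_closedNbhd_copy hp
  simpa using Finset.card_le_card_of_surjOn block hsurj

end Bgraph

theorem stmt7_general (n : ℕ) : iotaP3 (Bgraph n) = n / 4 := by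
  refine le_antisymm ?_ (le_iotaP3 fun _ => Bgraph.le_card_of_isP3Isolating)
  calc iotaP3 (Bgraph n)
      ≤ (Bgraph.pathVertices n).card := iotaP3_le_card Bgraph.isP3Isolating_pathVertices
    _ = n / 4 := by simp [Bgraph.pathVertices]

/-- For every `n ≥ 4`, `ι(B_{n,P3}, P3) = ⌊n/4⌋`. -/
theorem stmt7 (n : ℕ) (hn : 4 ≤ n) : iotaP3 (Bgraph n) = n / 4 :=
  stmt7_general n
end

section
/- The graph G15 on vertex set {1,…,15} with edges {1,2},{1,15},{2,15},{2,3},{3,4},{3,13},{4,12},{12,5},{4,14},{5,6},{5,10},{6,7},{6,11},{7,8},{7,9},{8,9},{9,10},{10,11},{11,13},{13,14},{14,15} has P3-isolation number exactly 4. -/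
open SimpleGraph

/-- The graph `G₁₅` of the paper, with vertices `0,…,14` standing for `1,…,15`. -/
def G15graph : SimpleGraph (Fin 15) :=
  SimpleGraph.fromRel (fun u v => ((u.val, v.val) ∈
    [(0,1),(0,14),(1,14),(1,2),(2,3),(2,12),(3,11),(11,4),(3,13),(4,5),(4,9),
     (5,6),(5,10),(6,7),(6,8),(7,8),(8,9),(9,10),(10,12),(12,13),(13,14)] : Prop))

/-!
The set `{1, 3, 5, 6}` (here `{0, 2, 4, 5}`) is `P3`-isolating: every path on three vertices meets
its closed neighbourhood. Conversely, any set of at most three vertices lies in some triple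
`{a, b, c}`, and for each of the `15³` triples one of eighteen listed paths avoids `N[{a, b, c}]`.
Both finite checks are done by `decide`, with vertex sets encoded as bitmasks so that the kernel
evaluates them with its accelerated `Nat` operations.
-/

section General

variable {V : Type*} {G : SimpleGraph V}

lemma containsP3_induce_iff (s : Set V) :
    containsP3 (G.induce s) ↔
      ∃ x y z, x ∈ s ∧ y ∈ s ∧ z ∈ s ∧ x ≠ z ∧ G.Adj x y ∧ G.Adj y z := by
  constructor
  · rintro ⟨f, hf, hadj⟩
    have h01 : (pathGraph 3).Adj 0 1 := by simp [pathGraph_adj]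
    have h12 : (pathGraph 3).Adj 1 2 := by simp [pathGraph_adj]
    exact ⟨f 0, f 1, f 2, (f 0).2, (f 1).2, (f 2).2,
      fun h => absurd (hf (Subtype.ext h)) (by decide), hadj 0 1 h01, hadj 1 2 h12⟩
  · rintro ⟨x, y, z, hx, hy, hz, hxz, hxy, hyz⟩
    refine ⟨![⟨x, hx⟩, ⟨y, hy⟩, ⟨z, hz⟩], ?_, ?_⟩
    · intro a b hab
      fin_cases a <;> fin_cases b <;> simp_all [hxy.ne, hyz.ne, hxy.ne.symm, hyz.ne.symm]
    · intro a b hab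
      rw [pathGraph_adj] at hab
      fin_cases a <;> fin_cases b <;> simp_all [hxy.symm, hyz.symm]

lemma isP3Isolating_iff (D : Set V) :
    IsP3Isolating G D ↔ ∀ x y z, x ≠ z → G.Adj x y → G.Adj y z →
      x ∈ closedNbhd G D ∨ y ∈ closedNbhd G D ∨ z ∈ closedNbhd G D := by
  simp only [IsP3Isolating, containsP3_induce_iff, Set.mem_compl_iff, not_exists]
  exact forall₃_congr fun x y z => by tauto

lemma closedNbhd_mono {D D' : Set V} (h : D ⊆ D') : closedNbhd G D ⊆ closedNbhd G D' := by
  rintro v (hv | ⟨d, hd, hdv⟩)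
  · exact Or.inl (h hv)
  · exact Or.inr ⟨d, h hd, hdv⟩

lemma IsP3Isolating.mono {D D' : Set V} (hD : IsP3Isolating G D) (h : D ⊆ D') :
    IsP3Isolating G D' := by
  rw [isP3Isolating_iff] at hD ⊢
  intro x y z hxz hxy hyz
  have := closedNbhd_mono (G := G) h
  rcases hD x y z hxz hxy hyz with hx | hy | hz
  exacts [Or.inl (this hx), Or.inr (Or.inl (this hy)), Or.inr (Or.inr (this hz))]

lemma iotaP3_eq_of_isP3Isolating {D : Finset V} {k : ℕ} (hD : IsP3Isolating G D)
    (hk : D.card = k) (hmin : ∀ D' : Finset V, IsP3Isolating G D' → k ≤ D'.card) :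
    iotaP3 G = k :=
  le_antisymm (Nat.sInf_le ⟨D, hk, hD⟩) (le_csInf ⟨k, D, hk, hD⟩ fun _ ⟨D', hD', hiso⟩ =>
    hD' ▸ hmin D' hiso)

lemma four_le_card_of_isP3Isolating [Fintype V] [DecidableEq V] (hV : 3 ≤ Fintype.card V)
    (htriple : ∀ a b c : V, ¬ IsP3Isolating G ↑({a, b, c} : Finset V))
    (D : Finset V) (hD : IsP3Isolating G D) : 4 ≤ D.card := by
  by_contra! hcard
  obtain ⟨T, hDT, -, hT⟩ :=
    Finset.exists_subsuperset_card_eq D.subset_univ (Nat.le_of_lt_succ hcard) hV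
  obtain ⟨a, b, c, -, -, -, rfl⟩ := Finset.card_eq_three.mp hT
  exact htriple a b c (hD.mono (Finset.coe_subset.mpr hDT))

end General

section Bitmask

variable {n : ℕ} {G : SimpleGraph (Fin n)}

def closedNbhdMask (m : Fin n → ℕ) (l : List (Fin n)) : ℕ :=
  (l.map m).foldr (· ||| ·) 0

lemma testBit_closedNbhdMask {m : Fin n → ℕ}
    (hm : ∀ d v : Fin n, (m d).testBit v = true ↔ v = d ∨ G.Adj d v) (l : List (Fin n))
    (v : Fin n) :
    (closedNbhdMask m l).testBit v = true ↔ v ∈ closedNbhd G {d | d ∈ l} := by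
  induction l with
  | nil => simp [closedNbhdMask, closedNbhd]
  | cons d l ih =>
    simp only [closedNbhdMask, List.map_cons, List.foldr_cons, Nat.testBit_or,
      Bool.or_eq_true] at ih ⊢
    rw [ih, hm]
    simp only [closedNbhd, Set.mem_ofPred_eq, List.mem_cons, exists_eq_or_imp]
    tauto

end Bitmask

instance : DecidableRel G15graph.Adj := fun a b =>
  decidable_of_iff _ (fromRel_adj _ a b).symm

/-- Bit `v` of `g15NbhdMask d` is set iff `v ∈ N[d]`. -/
def g15NbhdMask : Fin 15 → ℕ :=
  ![16387, 16391, 4110, 10252, 2608, 1136, 480, 448, 960, 1808, 5664, 2072, 13316, 28680, 24579]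

lemma testBit_g15NbhdMask :
    ∀ d v : Fin 15, (g15NbhdMask d).testBit v = true ↔ v = d ∨ G15graph.Adj d v := by
  decide

lemma mem_closedNbhd_g15_iff (l : List (Fin 15)) (v : Fin 15) :
    v ∈ closedNbhd G15graph ↑l.toFinset ↔ (closedNbhdMask g15NbhdMask l).testBit v = true := by
  rw [List.coe_toFinset, testBit_closedNbhdMask testBit_g15NbhdMask]

lemma isP3Isolating_g15 : IsP3Isolating G15graph ↑([0, 2, 4, 5] : List (Fin 15)).toFinset := by
  rw [isP3Isolating_iff]
  simp only [mem_closedNbhd_g15_iff]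
  decide

/-- Found by a greedy set cover over the 39 paths `x - y - z` of `G₁₅`. -/
def g15Paths : List (Fin 15 × Fin 15 × Fin 15) :=
  [(1, 0, 14), (7, 6, 8), (3, 2, 12), (9, 4, 11), (0, 1, 2), (0, 14, 13), (11, 3, 13), (5, 6, 7),
   (7, 8, 9), (4, 5, 10), (9, 10, 12), (3, 11, 4), (10, 12, 13), (2, 3, 11), (5, 4, 11),
   (4, 9, 10), (3, 13, 12), (5, 10, 12)]

lemma g15Paths_isPath :
    ∀ p ∈ g15Paths, p.1 ≠ p.2.2 ∧ G15graph.Adj p.1 p.2.1 ∧ G15graph.Adj p.2.1 p.2.2 := by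
  simp only [g15Paths, List.forall_mem_cons, List.not_mem_nil, IsEmpty.forall_iff, implies_true,
    and_true]
  decide

lemma exists_g15Paths_avoiding : ∀ a b c : Fin 15, ∃ p ∈ g15Paths,
    (closedNbhdMask g15NbhdMask [a, b, c]).testBit p.1 = false ∧
    (closedNbhdMask g15NbhdMask [a, b, c]).testBit p.2.1 = false ∧
    (closedNbhdMask g15NbhdMask [a, b, c]).testBit p.2.2 = false := by
  decide

lemma not_isP3Isolating_g15_triple (a b c : Fin 15) :
    ¬ IsP3Isolating G15graph ↑({a, b, c} : Finset (Fin 15)) := by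
  obtain ⟨⟨x, y, z⟩, hp, hx, hy, hz⟩ := exists_g15Paths_avoiding a b c
  obtain ⟨hxz, hxy, hyz⟩ := g15Paths_isPath _ hp
  have htriple : ({a, b, c} : Finset (Fin 15)) = [a, b, c].toFinset := by simp
  rw [htriple, isP3Isolating_iff]
  intro h
  simp only [mem_closedNbhd_g15_iff] at h
  rcases h x y z hxz hxy hyz with h | h | h <;> simp_all

/-- The graph `G₁₅` has `P3`-isolation number exactly `4`. -/
theorem stmt11 : iotaP3 G15graph = 4 :=
  iotaP3_eq_of_isP3Isolating isP3Isolating_g15 (by decide)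
    (four_le_card_of_isP3Isolating (by simp) not_isP3Isolating_g15_triple)
end
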